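/- Let α be a finite alphabet consisting of exactly two distinct letters a and b. Then each of the families of symmetric definite, left-sided comet, right-sided comet, and two-sided comet languages over α is incomparable to each of the families of finite, nilpotent, definite, ordered, and non-counting languages over α. -/

import Mathlib

/-!
The witness for the first half is `(aa)∗ b ⊤`. It absorbs `⊤` on the right and its own star on
either side, so it is symmetric definite and a comet of each kind (with `G` the language itself).
Whether it contains `aⁿ b` depends on the parity of `n`. Hence it and its complement are infinite;
it is not definite, since a definite language keeps long words when a letter is prepended; it is
not non-counting; and it is not ordered, since the orbit of a state under a monotone map of a
finite chain is eventually constant.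

The witness for the second half is `{ε}`, which lies in all five families. Symmetric definite
languages and one-sided comets are two-sided comets (take `G = ⊤`, resp. `E` or `H` equal to
`{ε}`), and a two-sided comet containing `ε` also contains the nonempty words of `G`.
-/

open Language Computability

universe u

variable {α : Type}

/-- The n-fold repetition (power) of a word. -/
def wordPow (y : List α) : ℕ → List α
  | 0 => []
  | n + 1 => y ++ wordPow y n

/-- A star language: the Kleene star of some regular language. -/
def IsStarLang (L : Language α) : Prop :=
  ∃ H : Language α, H.IsRegular ∧ L = H∗

/-- A left-sided comet. -/
def IsLeftComet (L : Language α) : Prop :=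
  ∃ E G : Language α, E.IsRegular ∧ G.IsRegular ∧ G ≠ 0 ∧ G ≠ 1 ∧ L = E * G∗

/-- A right-sided comet. -/
def IsRightComet (L : Language α) : Prop :=
  ∃ G H : Language α, G.IsRegular ∧ H.IsRegular ∧ G ≠ 0 ∧ G ≠ 1 ∧ L = G∗ * H

/-- A two-sided comet. -/
def IsTwoComet (L : Language α) : Prop :=
  ∃ E G H : Language α, E.IsRegular ∧ G.IsRegular ∧ H.IsRegular ∧
    G ≠ 0 ∧ G ≠ 1 ∧ L = E * G∗ * H

/-- A regular expression is union-free if it is built from the atoms `0` (empty language)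
and single letters using only concatenation and Kleene star. -/
def RegularExpression.UnionFree : RegularExpression α → Prop
  | RegularExpression.zero => True
  | RegularExpression.epsilon => False
  | RegularExpression.char _ => True
  | RegularExpression.plus _ _ => False
  | RegularExpression.comp r s => r.UnionFree ∧ s.UnionFree
  | RegularExpression.star r => r.UnionFree

/-- A union-free language: the language of a union-free regular expression. -/
def IsUnionFree (L : Language α) : Prop :=
  ∃ r : RegularExpression α, r.UnionFree ∧ r.matches' = L

/-- A monoidal language. -/
def IsMonoidal (L : Language α) : Prop := L = (⊤ : Language α)

/-- The language of one-letter words with letters from `X`. -/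
def lettersLang (X : Set α) : Language α := {w : List α | ∃ a ∈ X, w = [a]}

/-- A combinational language: `⊤ · X` for a set `X` of one-letter words. -/
def IsCombinational (L : Language α) : Prop :=
  ∃ X : Set α, L = (⊤ : Language α) * lettersLang X

/-- A symmetric definite language: `E · ⊤ · H` with `E, H` regular. -/
def IsSymDef (L : Language α) : Prop :=
  ∃ E H : Language α, E.IsRegular ∧ H.IsRegular ∧ L = E * (⊤ : Language α) * H

/-- A nilpotent language: finite or with finite complement. -/
def IsNilpotentLang (L : Language α) : Prop := L.Finite ∨ (Lᶜ : Language α).Finite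

/-- A definite language: `A ∪ ⊤ · B` with `A, B` finite. -/
def IsDefinite (L : Language α) : Prop :=
  ∃ A B : Language α, A.Finite ∧ B.Finite ∧ L = A + (⊤ : Language α) * B  -- `+` of languages is union

/-- An ordered language: accepted by a DFA with linearly ordered state set
whose transition maps are all monotone. -/
def IsOrdered (L : Language α) : Prop :=
  ∃ (σ : Type) (_ : Fintype σ) (_ : LinearOrder σ) (M : DFA α σ),
    (∀ a : α, Monotone fun q => M.step q a) ∧ M.accepts = L

/-- The non-counting property. -/
def HasNonCounting (L : Language α) : Prop :=
  ∃ k : ℕ, 1 ≤ k ∧ ∀ x y z : List α,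
    (x ++ wordPow y k ++ z ∈ L ↔ x ++ wordPow y (k + 1) ++ z ∈ L)

/-- A non-counting (star-free) regular language. -/
def IsNonCounting (L : Language α) : Prop := L.IsRegular ∧ HasNonCounting L

/-- The power-separating property. -/
def HasPowerSep (L : Language α) : Prop :=
  ∃ m : ℕ, 1 ≤ m ∧ ∀ x : List α,
    (∀ n, m ≤ n → wordPow x n ∉ L) ∨ (∀ n, m ≤ n → wordPow x n ∈ L)

/-- A power-separating regular language. -/
def IsPowerSep (L : Language α) : Prop := L.IsRegular ∧ HasPowerSep L

/-- A suffix-closed (regular) language. -/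
def IsSuffixClosed (L : Language α) : Prop :=
  L.IsRegular ∧ ∀ x y : List α, x ++ y ∈ L → y ∈ L

/-- A circular (regular) language. -/
def IsCircular (L : Language α) : Prop :=
  L.IsRegular ∧ ∀ u v : List α, u ++ v ∈ L → v ++ u ∈ L

/-- A commutative (regular) language. -/
def IsCommutative (L : Language α) : Prop :=
  L.IsRegular ∧ ∀ w ∈ L, ∀ v : List α, w.Perm v → v ∈ L

/-- The reversal of a language. -/
def Reversal (L : Language α) : Language α := {w : List α | ∃ v ∈ L, w = v.reverse}

/-- Two families of languages are incomparable if neither is contained in the other. -/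
def Incomparable (P Q : Language α → Prop) : Prop :=
  (∃ L : Language α, P L ∧ ¬ Q L) ∧ (∃ L : Language α, Q L ∧ ¬ P L)

/-- A finite language. -/
def IsFiniteLang (L : Language α) : Prop := L.Finite

open List

theorem List.eq_of_replicate_append_cons_eq {a b : α} (hab : a ≠ b) :
    ∀ {p q : ℕ} {s t : List α}, replicate p a ++ b :: s = replicate q a ++ b :: t → p = q
  | 0, 0, _, _, _ => rfl
  | 0, _ + 1, _, _, h => absurd (cons.inj h).1 hab.symm
  | _ + 1, 0, _, _, h => absurd (cons.inj h).1 hab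
  | _ + 1, _ + 1, _, _, h => congrArg (· + 1) (eq_of_replicate_append_cons_eq hab (cons.inj h).2)

theorem List.replicate_append_injective (c : α) (z : List α) :
    Function.Injective fun n => replicate n c ++ z := fun m n h => by
  simpa using congrArg length h

theorem wordPow_singleton (c : α) (n : ℕ) : wordPow [c] n = replicate n c := by
  induction n with
  | zero => rfl
  | succ n ih => rw [wordPow, ih, replicate_succ, singleton_append]

theorem DFA.evalFrom_replicate {σ : Type} (M : DFA α σ) (c : α) (n : ℕ) (q : σ) :
    M.evalFrom q (replicate n c) = (M.step · c)^[n] q := by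
  induction n generalizing q with
  | zero => rfl
  | succ n ih => rw [replicate_succ, DFA.evalFrom_cons, ih, Function.iterate_succ_apply]

theorem Monotone.exists_iterate_eventually_eq {σ : Type} [LinearOrder σ] [Finite σ]
    {f : σ → σ} (hf : Monotone f) (q : σ) : ∃ m, ∀ n, m ≤ n → f^[n] q = f^[m] q := by
  rcases le_total q (f q) with h | h
  · obtain ⟨m, hm⟩ := WellFoundedGT.monotone_chain_condition ⟨_, hf.monotone_iterate_of_le_map h⟩
    exact ⟨m, fun n hn => (hm n hn).symm⟩
  · obtain ⟨m, hm⟩ := WellFoundedLT.antitone_chain_condition (hf.antitone_iterate_of_map_le h)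
    exact ⟨m, fun n hn => (hm n hn).symm⟩

namespace Language

theorem ne_zero_of_mem {l : Language α} {w : List α} (hw : w ∈ l) : l ≠ 0 :=
  fun h => notMem_zero w (h ▸ hw)

theorem ne_one_of_mem {l : Language α} {w : List α} (hw : w ∈ l) (hne : w ≠ []) : l ≠ 1 :=
  fun h => hne ((mem_one w).1 (h ▸ hw))

theorem exists_mem_ne_nil {l : Language α} (h0 : l ≠ 0) (h1 : l ≠ 1) : ∃ w ∈ l, w ≠ [] := by
  by_contra! h
  by_cases hnil : [] ∈ l
  · exact h1 (ext fun w => ⟨fun hw => (mem_one w).2 (h w hw), fun hw => (mem_one w).1 hw ▸ hnil⟩)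
  · exact h0 (ext fun w => ⟨fun hw => hnil (h w hw ▸ hw), fun hw => absurd hw (notMem_zero w)⟩)

theorem nil_mem_mul {l m : Language α} : [] ∈ l * m ↔ [] ∈ l ∧ [] ∈ m := by
  simp [mem_mul]

theorem top_kstar : (⊤ : Language α)∗ = ⊤ := top_unique le_kstar

theorem isRegular_top : (⊤ : Language α).IsRegular :=
  ⟨Unit, inferInstance, ⟨fun _ _ => (), (), Set.univ⟩, top_unique fun _ _ => trivial⟩

theorem isRegular_of_leftQuotient_mem {L : Language α} {S : Set (Language α)} (hS : S.Finite)
    (hL : L ∈ S) (hstep : ∀ M ∈ S, ∀ c, M.leftQuotient [c] ∈ S) : L.IsRegular := by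
  refine .of_finite_range_leftQuotient (hS.subset ?_)
  rintro _ ⟨x, rfl⟩
  induction x using List.reverseRecOn with
  | nil => exact hL
  | append_singleton x c ih => rw [leftQuotient_append]; exact hstep _ ih c

end Language

theorem IsOrdered.isRegular {L : Language α} (h : IsOrdered L) : L.IsRegular := by
  obtain ⟨σ, _, _, M, -, rfl⟩ := h
  exact ⟨σ, inferInstance, M, rfl⟩

theorem IsOrdered.exists_eventually_mem_iff {L : Language α} (h : IsOrdered L) (c : α)
    (x z : List α) :
    ∃ m, ∀ n, m ≤ n → (x ++ replicate n c ++ z ∈ L ↔ x ++ replicate m c ++ z ∈ L) := by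
  obtain ⟨σ, _, _, M, hmono, rfl⟩ := h
  obtain ⟨m, hm⟩ := (hmono c).exists_iterate_eventually_eq (M.eval x)
  refine ⟨m, fun n hn => ?_⟩
  simp only [DFA.mem_accepts, DFA.eval, DFA.evalFrom_of_append, DFA.evalFrom_replicate]
  rw [← DFA.eval, hm n hn]

theorem IsDefinite.exists_cons_mem {L : Language α} (h : IsDefinite L) :
    ∃ N, ∀ w ∈ L, N < w.length → ∀ c, c :: w ∈ L := by
  obtain ⟨A, B, hA, -, rfl⟩ := h
  obtain ⟨N, hN⟩ := (hA.image length).bddAbove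
  refine ⟨N, fun w hw hlen c => ?_⟩
  rcases (mem_add _ _ _).1 hw with hwA | hwB
  · exact absurd (hN ⟨w, hwA, rfl⟩) hlen.not_ge
  · obtain ⟨x, -, v, hv, rfl⟩ := mem_mul.1 hwB
    exact (mem_add _ _ _).2 (Or.inr (mem_mul.2 ⟨c :: x, trivial, v, hv, rfl⟩))

def epsilonDFA : DFA α Bool where
  step _ _ := true
  start := false
  accept := {false}

theorem accepts_epsilonDFA : (epsilonDFA : DFA α Bool).accepts = 1 := by
  have trap : ∀ w : List α, epsilonDFA.evalFrom true w = true := fun w => by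
    induction w with
    | nil => rfl
    | cons c w ih => exact ih
  ext (_ | ⟨c, w⟩)
  · simp [DFA.mem_accepts, DFA.eval, epsilonDFA, mem_one]
  · change epsilonDFA.evalFrom true w ∈ ({false} : Set Bool) ↔ c :: w ∈ (1 : Language α)
    simp [trap, mem_one]

theorem isOrdered_one : IsOrdered (1 : Language α) :=
  ⟨Bool, inferInstance, inferInstance, epsilonDFA, fun _ => monotone_const, accepts_epsilonDFA⟩

theorem Language.isRegular_one : (1 : Language α).IsRegular := isOrdered_one.isRegular

theorem isFiniteLang_one : IsFiniteLang (1 : Language α) := by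
  rw [IsFiniteLang, one_def]
  exact Set.finite_singleton _

theorem isDefinite_one : IsDefinite (1 : Language α) :=
  ⟨1, 0, isFiniteLang_one, Set.finite_empty, by rw [mul_zero, add_zero]⟩

theorem isNonCounting_one : IsNonCounting (1 : Language α) := by
  refine ⟨isRegular_one, 1, le_rfl, fun x y z => ?_⟩
  simp [wordPow, mem_one]

theorem IsLeftComet.isTwoComet {L : Language α} (h : IsLeftComet L) : IsTwoComet L := by
  obtain ⟨E, G, hE, hG, h0, h1, rfl⟩ := h
  exact ⟨E, G, 1, hE, hG, isRegular_one, h0, h1, (mul_one _).symm⟩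

theorem IsRightComet.isTwoComet {L : Language α} (h : IsRightComet L) : IsTwoComet L := by
  obtain ⟨G, H, hG, hH, h0, h1, rfl⟩ := h
  exact ⟨1, G, H, isRegular_one, hG, hH, h0, h1, by rw [one_mul]⟩

theorem IsSymDef.isTwoComet [Nonempty α] {L : Language α} (h : IsSymDef L) : IsTwoComet L := by
  obtain ⟨E, H, hE, hH, rfl⟩ := h
  obtain ⟨c⟩ := ‹Nonempty α›
  have hc : [c] ∈ (⊤ : Language α) := trivial
  exact ⟨E, ⊤, H, hE, isRegular_top, hH, ne_zero_of_mem hc, ne_one_of_mem hc (cons_ne_nil _ _),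
    by rw [top_kstar]⟩

theorem IsTwoComet.exists_mem_ne_nil {L : Language α} (h : IsTwoComet L) (hnil : [] ∈ L) :
    ∃ w ∈ L, w ≠ [] := by
  obtain ⟨E, G, H, -, -, -, h0, h1, rfl⟩ := h
  obtain ⟨⟨hE, -⟩, hH⟩ := nil_mem_mul.1 hnil |>.imp_left nil_mem_mul.1
  obtain ⟨w, hw, hne⟩ := Language.exists_mem_ne_nil h0 h1
  exact ⟨[] ++ w ++ [], append_mem_mul (append_mem_mul hE (le_kstar (a := G) hw)) hH, by simpa⟩

theorem not_isTwoComet_one : ¬ IsTwoComet (1 : Language α) := fun h => by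
  obtain ⟨w, hw, hne⟩ := h.exists_mem_ne_nil nil_mem_one
  exact hne ((mem_one w).1 hw)

def aaStarBTop (a b : α) : Language α := {w | ∃ n u, w = replicate (2 * n) a ++ b :: u}

section aaStarBTop

variable {a b : α}

theorem replicate_append_cons_mem_aaStarBTop (hab : a ≠ b) (n : ℕ) (u : List α) :
    replicate n a ++ b :: u ∈ aaStarBTop a b ↔ Even n := by
  constructor
  · rintro ⟨m, v, h⟩
    exact ⟨m, by rw [eq_of_replicate_append_cons_eq hab h, two_mul]⟩
  · rintro ⟨m, rfl⟩
    exact ⟨m, u, by rw [two_mul]⟩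

theorem cons_cons_mem_aaStarBTop (hab : a ≠ b) (w : List α) :
    a :: a :: w ∈ aaStarBTop a b ↔ w ∈ aaStarBTop a b := by
  constructor
  · rintro ⟨_ | n, u, h⟩
    · exact absurd (cons.inj h).1 hab
    · exact ⟨n, u, by simpa [Nat.mul_succ, replicate_succ] using h⟩
  · rintro ⟨n, u, rfl⟩
    exact ⟨n + 1, u, by simp [Nat.mul_succ, replicate_succ]⟩

theorem aaStarBTop_mul_le (m : Language α) : aaStarBTop a b * m ≤ aaStarBTop a b := by
  rintro _ ⟨_, ⟨n, u, rfl⟩, v, -, rfl⟩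
  exact ⟨n, u ++ v, by simp⟩

theorem aaStarBTop_mul_of_nil_mem {m : Language α} (hm : [] ∈ m) :
    aaStarBTop a b * m = aaStarBTop a b :=
  le_antisymm (aaStarBTop_mul_le m) fun w hw => ⟨w, hw, [], hm, append_nil w⟩

theorem kstar_mul_aaStarBTop : (aaStarBTop a b)∗ * aaStarBTop a b = aaStarBTop a b :=
  le_antisymm (kstar_mul_le_self (aaStarBTop_mul_le _)) (le_mul_of_one_le_left' one_le_kstar)

theorem singleton_mem_aaStarBTop : [b] ∈ aaStarBTop a b := ⟨0, [], rfl⟩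

theorem isRegular_aaStarBTop (hab : a ≠ b) (hall : ∀ c : α, c = a ∨ c = b) :
    (aaStarBTop a b).IsRegular := by
  set L := aaStarBTop a b
  refine isRegular_of_leftQuotient_mem (S := {L, L.leftQuotient [a], ⊤, 0}) (Set.toFinite _)
    (by simp) ?_
  have top_quot (c : α) : (⊤ : Language α).leftQuotient [c] = ⊤ := top_unique fun _ _ => trivial
  have zero_quot (c : α) : (0 : Language α).leftQuotient [c] = 0 := rfl
  have aa_quot : (L.leftQuotient [a]).leftQuotient [a] = L := by
    ext w; exact cons_cons_mem_aaStarBTop hab w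
  have b_quot : L.leftQuotient [b] = ⊤ := top_unique fun w _ => ⟨0, w, rfl⟩
  have ab_quot : (L.leftQuotient [a]).leftQuotient [b] = 0 := by
    ext w
    simpa using replicate_append_cons_mem_aaStarBTop hab 1 w
  rintro M (rfl | rfl | rfl | rfl) c <;> obtain rfl | rfl := hall c <;> simp [*]

theorem infinite_aaStarBTop (hab : a ≠ b) : (aaStarBTop a b).Infinite :=
  Set.infinite_of_injective_forall_mem
    ((replicate_append_injective a [b]).comp fun m n h => by simpa using h)
    fun n => (replicate_append_cons_mem_aaStarBTop hab (2 * n) []).2 (even_two_mul n)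

theorem infinite_compl_aaStarBTop (hab : a ≠ b) : (aaStarBTop a b)ᶜ.Infinite :=
  Set.infinite_of_injective_forall_mem
    ((replicate_append_injective a [b]).comp fun m n h => by simpa using h)
    fun n => (replicate_append_cons_mem_aaStarBTop hab (2 * n + 1) []).not.2
      (Nat.not_even_iff_odd.2 (odd_two_mul_add_one n))

theorem not_isNilpotentLang_aaStarBTop (hab : a ≠ b) : ¬ IsNilpotentLang (aaStarBTop a b) := by
  rintro (h | h)
  exacts [infinite_aaStarBTop hab h, infinite_compl_aaStarBTop hab h]

theorem not_isDefinite_aaStarBTop (hab : a ≠ b) : ¬ IsDefinite (aaStarBTop a b) := fun h => by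
  obtain ⟨N, hN⟩ := h.exists_cons_mem
  have hmem := hN _ ((replicate_append_cons_mem_aaStarBTop hab (2 * N) []).2 (even_two_mul N))
    (by rw [length_append, length_replicate, length_singleton]; omega) a
  rw [← cons_append, ← replicate_succ, replicate_append_cons_mem_aaStarBTop hab] at hmem
  exact Nat.not_even_iff_odd.2 (odd_two_mul_add_one N) hmem

theorem not_isOrdered_aaStarBTop (hab : a ≠ b) : ¬ IsOrdered (aaStarBTop a b) := fun h => by
  obtain ⟨m, hm⟩ := h.exists_eventually_mem_iff a [] [b]
  have hparity := (hm (m + 1) m.le_succ).trans (hm m le_rfl).symm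
  simp only [nil_append, replicate_append_cons_mem_aaStarBTop hab, Nat.even_add_one] at hparity
  exact iff_not_self hparity.symm

theorem not_hasNonCounting_aaStarBTop (hab : a ≠ b) : ¬ HasNonCounting (aaStarBTop a b) := by
  rintro ⟨k, -, hk⟩
  have hparity := hk [] [a] [b]
  simp only [wordPow_singleton, nil_append, replicate_append_cons_mem_aaStarBTop hab,
    Nat.even_add_one] at hparity
  exact iff_not_self hparity

theorem isSymDef_aaStarBTop (hab : a ≠ b) (hall : ∀ c : α, c = a ∨ c = b) :
    IsSymDef (aaStarBTop a b) :=
  ⟨_, 1, isRegular_aaStarBTop hab hall, isRegular_one,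
    by rw [mul_one, aaStarBTop_mul_of_nil_mem (m := ⊤) trivial]⟩

theorem isLeftComet_aaStarBTop (hab : a ≠ b) (hall : ∀ c : α, c = a ∨ c = b) :
    IsLeftComet (aaStarBTop a b) :=
  ⟨_, _, isRegular_aaStarBTop hab hall, isRegular_aaStarBTop hab hall,
    ne_zero_of_mem singleton_mem_aaStarBTop, ne_one_of_mem singleton_mem_aaStarBTop (cons_ne_nil _ _),
    (aaStarBTop_mul_of_nil_mem (nil_mem_kstar _)).symm⟩

theorem isRightComet_aaStarBTop (hab : a ≠ b) (hall : ∀ c : α, c = a ∨ c = b) :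
    IsRightComet (aaStarBTop a b) :=
  ⟨_, _, isRegular_aaStarBTop hab hall, isRegular_aaStarBTop hab hall,
    ne_zero_of_mem singleton_mem_aaStarBTop, ne_one_of_mem singleton_mem_aaStarBTop (cons_ne_nil _ _),
    kstar_mul_aaStarBTop.symm⟩

end aaStarBTop

theorem sydef_comets_incomparable_fin_nil_def_ord_nc_general (a b : α)
    (hab : a ≠ b) (hall : ∀ c : α, c = a ∨ c = b) :
    ∀ P ∈ ([IsSymDef, IsLeftComet, IsRightComet, IsTwoComet] : List (Language α → Prop)),
    ∀ Q ∈ ([IsFiniteLang, IsNilpotentLang, IsDefinite, IsOrdered, IsNonCounting] :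
      List (Language α → Prop)),
    Incomparable P Q := by
  have : Nonempty α := ⟨a⟩
  intro P hP Q hQ
  simp only [List.mem_cons, List.not_mem_nil, or_false] at hP hQ
  have hP' : P (aaStarBTop a b) ∧ ¬ P 1 := by
    rcases hP with rfl | rfl | rfl | rfl
    · exact ⟨isSymDef_aaStarBTop hab hall, fun h => not_isTwoComet_one h.isTwoComet⟩
    · exact ⟨isLeftComet_aaStarBTop hab hall, fun h => not_isTwoComet_one h.isTwoComet⟩
    · exact ⟨isRightComet_aaStarBTop hab hall, fun h => not_isTwoComet_one h.isTwoComet⟩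
    · exact ⟨(isLeftComet_aaStarBTop hab hall).isTwoComet, not_isTwoComet_one⟩
  have hQ' : Q 1 ∧ ¬ Q (aaStarBTop a b) := by
    rcases hQ with rfl | rfl | rfl | rfl | rfl
    · exact ⟨isFiniteLang_one, infinite_aaStarBTop hab⟩
    · exact ⟨Or.inl isFiniteLang_one, not_isNilpotentLang_aaStarBTop hab⟩
    · exact ⟨isDefinite_one, not_isDefinite_aaStarBTop hab⟩
    · exact ⟨isOrdered_one, not_isOrdered_aaStarBTop hab⟩
    · exact ⟨isNonCounting_one, fun h => not_hasNonCounting_aaStarBTop hab h.2⟩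
  exact ⟨⟨_, hP'.1, hQ'.2⟩, ⟨1, hQ'.1, hP'.2⟩⟩

/-- Over a two-letter alphabet, `SYDEF`, `LCOM`, `RCOM`, and `2COM` are each incomparable
to each of `FIN`, `NIL`, `DEF`, `ORD`, and `NC`. -/
theorem sydef_comets_incomparable_fin_nil_def_ord_nc [Fintype α] (a b : α)
    (hab : a ≠ b) (hall : ∀ c : α, c = a ∨ c = b) :
    ∀ P ∈ ([IsSymDef, IsLeftComet, IsRightComet, IsTwoComet] : List (Language α → Prop)),
    ∀ Q ∈ ([IsFiniteLang, IsNilpotentLang, IsDefinite, IsOrdered, IsNonCounting] :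
      List (Language α → Prop)),
    Incomparable P Q :=
  sydef_comets_incomparable_fin_nil_def_ord_nc_general a b hab hall
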